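/- arXiv:2412.14130 — 5 statements merged into one kernel-verified Lean document; each statement's English description precedes it below -/
import Mathlib

section
/- Suppose H, K, M are Hilbert spaces, T₀ on H, R₀ on K, V on M, Y₀: H → K, K: K → M, Z: H → M are bounded operators with Y₀T₀ = R₀Y₀. Put A = VZ - ZT₀ + KY₀, and define block operators T = [[V, A],[0, T₀]] on M ⊕ H, R = [[V, K],[0, R₀]] on M ⊕ K, and Y = [[I_M, Z],[0, Y₀]]: M ⊕ H → M ⊕ K. Then YT = RY. Moreover, if R and T₀ are polynomially bounded, then T is polynomially bounded. -/
open Polynomial Metric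

/-- An operator `T` is polynomially bounded if there is a constant `M` with
`‖p(T)‖ ≤ M ‖p‖_∞` for every polynomial `p`, where `‖p‖_∞` is the sup over the unit disk. -/
def PolyBounded {H : Type*} [NormedAddCommGroup H] [NormedSpace ℂ H]
    (T : H →L[ℂ] H) : Prop :=
  ∃ M : ℝ, ∀ (p : Polynomial ℂ) (K : ℝ),
    (∀ z ∈ ball (0 : ℂ) 1, ‖p.eval z‖ ≤ K) → ‖Polynomial.aeval T p‖ ≤ M * K

lemma intertwine_aeval {E F : Type*} [NormedAddCommGroup E] [NormedSpace ℂ E]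
    [NormedAddCommGroup F] [NormedSpace ℂ F]
    (S : E →L[ℂ] F) (T : E →L[ℂ] E) (R : F →L[ℂ] F)
    (h : S.comp T = R.comp S) (p : Polynomial ℂ) :
    S.comp (Polynomial.aeval T p) = (Polynomial.aeval R p).comp S := by
  induction p using Polynomial.induction_on with
  | C a =>
      ext x
      simp [Algebra.algebraMap_eq_smul_one]
  | add p q hp hq =>
      simp only [map_add, ContinuousLinearMap.comp_add, ContinuousLinearMap.add_comp, hp, hq]
  | monomial n a ih =>
      have e1 : (Polynomial.C a * X ^ (n + 1) : Polynomial ℂ) = (C a * X ^ n) * X := by ring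
      have e2 : (Polynomial.aeval T) (C a * X ^ n * X) = (Polynomial.aeval T) (C a * X ^ n) * T := by
        rw [map_mul, Polynomial.aeval_X]
      have e3 : (Polynomial.aeval R) (C a * X ^ n * X) = (Polynomial.aeval R) (C a * X ^ n) * R := by
        rw [map_mul, Polynomial.aeval_X]
      rw [e1, e2, e3, ContinuousLinearMap.mul_def, ContinuousLinearMap.mul_def,
        ← ContinuousLinearMap.comp_assoc, ih, ContinuousLinearMap.comp_assoc, h,
        ← ContinuousLinearMap.comp_assoc]

/-- With `A = VZ - ZT₀ + KY₀`, the block operators `T = [[V,A],[0,T₀]]`,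
`R = [[V,K],[0,R₀]]`, `Y = [[I,Z],[0,Y₀]]` satisfy `YT = RY`; and if `R` and `T₀`
are polynomially bounded then so is `T`. -/
theorem block_intertwining_polyBounded
    {𝓗 𝓚 𝓜 : Type*}
    [NormedAddCommGroup 𝓗] [InnerProductSpace ℂ 𝓗] [CompleteSpace 𝓗]
    [NormedAddCommGroup 𝓚] [InnerProductSpace ℂ 𝓚] [CompleteSpace 𝓚]
    [NormedAddCommGroup 𝓜] [InnerProductSpace ℂ 𝓜] [CompleteSpace 𝓜]
    (T₀ : 𝓗 →L[ℂ] 𝓗) (R₀ : 𝓚 →L[ℂ] 𝓚) (V : 𝓜 →L[ℂ] 𝓜)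
    (Y₀ : 𝓗 →L[ℂ] 𝓚) (K : 𝓚 →L[ℂ] 𝓜) (Z : 𝓗 →L[ℂ] 𝓜)
    (hint : Y₀.comp T₀ = R₀.comp Y₀)
    (A : 𝓗 →L[ℂ] 𝓜) (hA : A = V.comp Z - Z.comp T₀ + K.comp Y₀)
    (T : 𝓜 × 𝓗 →L[ℂ] 𝓜 × 𝓗) (hT : ∀ v : 𝓜 × 𝓗, T v = (V v.1 + A v.2, T₀ v.2))
    (R : 𝓜 × 𝓚 →L[ℂ] 𝓜 × 𝓚) (hR : ∀ v : 𝓜 × 𝓚, R v = (V v.1 + K v.2, R₀ v.2))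
    (Y : 𝓜 × 𝓗 →L[ℂ] 𝓜 × 𝓚) (hY : ∀ v : 𝓜 × 𝓗, Y v = (v.1 + Z v.2, Y₀ v.2)) :
    (∀ v, Y (T v) = R (Y v)) ∧ (PolyBounded R → PolyBounded T₀ → PolyBounded T) := by
  have hint' : ∀ x, Y₀ (T₀ x) = R₀ (Y₀ x) := fun x => by
    have := ContinuousLinearMap.ext_iff.mp hint x
    simpa using this
  have hcomm : ∀ v, Y (T v) = R (Y v) := by
    intro v
    rw [hT, hY, hR, hY]
    simp only [hA]
    ext
    · simp only [ContinuousLinearMap.add_apply, ContinuousLinearMap.sub_apply,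
        ContinuousLinearMap.coe_comp', Function.comp_apply, map_add]
      abel
    · exact hint' v.2
  refine ⟨hcomm, ?_⟩
  rintro ⟨MR, hMR⟩ ⟨M0, hM0⟩
  have hsnd : (ContinuousLinearMap.snd ℂ 𝓜 𝓗).comp T
      = T₀.comp (ContinuousLinearMap.snd ℂ 𝓜 𝓗) := by
    refine ContinuousLinearMap.ext fun v => ?_
    simp [hT v]
  have hYT : Y.comp T = R.comp Y := by
    refine ContinuousLinearMap.ext fun v => ?_
    simp [hcomm v]
  refine ⟨MR * ‖Y‖ + (‖Z‖ + 1) * M0, ?_⟩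
  intro p Kb hKb
  have hKb0 : (0:ℝ) ≤ Kb := le_trans (norm_nonneg _) (hKb 0 (by simp))
  have hRp : ‖Polynomial.aeval R p‖ ≤ MR * Kb := hMR p Kb hKb
  have hT0p : ‖Polynomial.aeval T₀ p‖ ≤ M0 * Kb := hM0 p Kb hKb
  have hRp0 : (0:ℝ) ≤ MR * Kb := le_trans (ContinuousLinearMap.opNorm_nonneg _) hRp
  have hT0p0 : (0:ℝ) ≤ M0 * Kb := le_trans (ContinuousLinearMap.opNorm_nonneg _) hT0p
  have hsnd' := intertwine_aeval (ContinuousLinearMap.snd ℂ 𝓜 𝓗) T T₀ hsnd p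
  have hY' := intertwine_aeval Y T R hYT p
  have hM1 : (MR * ‖Y‖ + (‖Z‖ + 1) * M0) * Kb
      = MR * Kb * ‖Y‖ + (‖Z‖ * (M0 * Kb) + M0 * Kb) := by ring
  rw [hM1]
  apply ContinuousLinearMap.opNorm_le_bound
  · positivity
  intro v
  set w := Polynomial.aeval T p v with hw
  have hw2 : w.2 = Polynomial.aeval T₀ p v.2 := by
    have := ContinuousLinearMap.ext_iff.mp hsnd' v
    simpa using this
  have hw1 : w.1 = (Polynomial.aeval R p (Y v)).1 - Z w.2 := by
    have h0 := ContinuousLinearMap.ext_iff.mp hY' v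
    simp only [ContinuousLinearMap.coe_comp', Function.comp_apply] at h0
    have h1 : (Y w).1 = (Polynomial.aeval R p (Y v)).1 := by rw [h0]
    rw [hY w] at h1
    exact eq_sub_of_add_eq h1
  have b2 : ‖w.2‖ ≤ M0 * Kb * ‖v‖ := by
    rw [hw2]
    calc ‖Polynomial.aeval T₀ p v.2‖ ≤ ‖Polynomial.aeval T₀ p‖ * ‖v.2‖ :=
          ContinuousLinearMap.le_opNorm _ _
      _ ≤ (M0 * Kb) * ‖v‖ :=
          mul_le_mul hT0p (norm_snd_le v) (norm_nonneg _) hT0p0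
  have b1 : ‖w.1‖ ≤ MR * Kb * ‖Y‖ * ‖v‖ + ‖Z‖ * (M0 * Kb * ‖v‖) := by
    rw [hw1]
    refine (norm_sub_le _ _).trans (add_le_add ?_ ?_)
    · calc ‖(Polynomial.aeval R p (Y v)).1‖ ≤ ‖Polynomial.aeval R p (Y v)‖ := norm_fst_le _
        _ ≤ ‖Polynomial.aeval R p‖ * ‖Y v‖ := ContinuousLinearMap.le_opNorm _ _
        _ ≤ (MR * Kb) * (‖Y‖ * ‖v‖) :=
            mul_le_mul hRp (ContinuousLinearMap.le_opNorm _ _) (norm_nonneg _) hRp0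
        _ = MR * Kb * ‖Y‖ * ‖v‖ := by ring
    · calc ‖Z w.2‖ ≤ ‖Z‖ * ‖w.2‖ := ContinuousLinearMap.le_opNorm _ _
        _ ≤ ‖Z‖ * (M0 * Kb * ‖v‖) := by
            exact mul_le_mul_of_nonneg_left b2 (norm_nonneg _)
  have hnn1 : (0:ℝ) ≤ MR * Kb * ‖Y‖ * ‖v‖ := by positivity
  have hnn2 : (0:ℝ) ≤ ‖Z‖ * (M0 * Kb * ‖v‖) := by positivity
  have hnn3 : (0:ℝ) ≤ M0 * Kb * ‖v‖ := by positivity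
  have hexp : (MR * Kb * ‖Y‖ + (‖Z‖ * (M0 * Kb) + M0 * Kb)) * ‖v‖
      = MR * Kb * ‖Y‖ * ‖v‖ + ‖Z‖ * (M0 * Kb * ‖v‖) + M0 * Kb * ‖v‖ := by ring
  rw [Prod.norm_def, hexp]
  apply max_le
  · linarith
  · linarith
end

section
/- Let {B_N} be a sequence of finite Blaschke products. Then there exists a sequence {r_N} with 0 < r_N < 1 such that for every sequence {w_N} ⊂ 𝔻 with |w_N| ≥ r_N, there exists a sequence {ζ_N} ⊂ 𝕋 of unimodular constants such that the infinite product ∏_N ζ_N (B_N ∘ β_{w_N}) converges (i.e., the combined zero sequence satisfies the Blaschke condition). -/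
/-!
Since `1 - |β_w(μ)|² = (1 - |w|²)(1 - |μ|²) / |1 - w̄μ|²` and `|1 - w̄μ| ≥ 1 - |μ|`, every zero
`β_w(μ)` of `B ∘ β_w` satisfies `1 - |β_w(μ)| ≤ (1 - |w|) · 4 / (1 - |μ|)`. Summing over the zeros
of `B_N` gives a block of the Blaschke sum at most `(1 - |w_N|) C_N` with `C_N = Σ 4 / (1 - |μ|)`,
so `1 - r_N = 2⁻ᴺ / (C_N + 2)` bounds the `N`-th block by `2⁻ᴺ`. The unimodular constants do not
affect the zeros, so `ζ_N = 1` will do.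
-/

/-- The Möbius map `β_w(z) = (w - z)/(1 - conj(w) z)`. -/
noncomputable def mobius (w z : ℂ) : ℂ := (w - z) / (1 - (starRingEnd ℂ) w * z)

section Mobius

variable {w μ : ℂ}

lemma norm_one_sub_conj_mul_sq_sub_norm_sub_sq (w μ : ℂ) :
    ‖1 - starRingEnd ℂ w * μ‖ ^ 2 - ‖w - μ‖ ^ 2 = (1 - ‖w‖ ^ 2) * (1 - ‖μ‖ ^ 2) := by
  simp only [← Complex.normSq_eq_norm_sq, Complex.normSq_apply, Complex.sub_re, Complex.sub_im,
    Complex.one_re, Complex.one_im, Complex.mul_re, Complex.mul_im, Complex.conj_re,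
    Complex.conj_im]
  ring

lemma one_sub_norm_le_norm_one_sub_conj_mul (hw : ‖w‖ ≤ 1) :
    1 - ‖μ‖ ≤ ‖1 - starRingEnd ℂ w * μ‖ := by
  have hwμ : ‖starRingEnd ℂ w * μ‖ ≤ ‖μ‖ := by
    rw [norm_mul, Complex.norm_conj]
    exact mul_le_of_le_one_left (norm_nonneg μ) hw
  calc 1 - ‖μ‖ ≤ ‖(1 : ℂ)‖ - ‖starRingEnd ℂ w * μ‖ := by rw [norm_one]; linarith
    _ ≤ ‖1 - starRingEnd ℂ w * μ‖ := norm_sub_norm_le _ _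

lemma one_sub_norm_mobius_sq (hw : ‖w‖ < 1) (hμ : ‖μ‖ < 1) :
    1 - ‖mobius w μ‖ ^ 2 =
      (1 - ‖w‖ ^ 2) * (1 - ‖μ‖ ^ 2) / ‖1 - starRingEnd ℂ w * μ‖ ^ 2 := by
  have hD : 0 < ‖1 - starRingEnd ℂ w * μ‖ :=
    (sub_pos.2 hμ).trans_le (one_sub_norm_le_norm_one_sub_conj_mul hw.le)
  rw [mobius, norm_div, div_pow, one_sub_div (by positivity),
    norm_one_sub_conj_mul_sq_sub_norm_sub_sq]

lemma norm_mobius_le_one (hw : ‖w‖ < 1) (hμ : ‖μ‖ < 1) : ‖mobius w μ‖ ≤ 1 := by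
  have h : 0 ≤ 1 - ‖mobius w μ‖ ^ 2 := by
    rw [one_sub_norm_mobius_sq hw hμ]
    have := norm_nonneg w
    have := norm_nonneg μ
    exact div_nonneg (mul_nonneg (by nlinarith) (by nlinarith)) (sq_nonneg _)
  nlinarith [norm_nonneg (mobius w μ)]

lemma one_sub_norm_mobius_le (hw : ‖w‖ < 1) (hμ : ‖μ‖ < 1) :
    1 - ‖mobius w μ‖ ≤ (1 - ‖w‖) * (4 / (1 - ‖μ‖)) := by
  have hw0 := norm_nonneg w
  have hμ0 := norm_nonneg μ
  have hgap : 0 < 1 - ‖μ‖ := sub_pos.2 hμ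
  have hβ := norm_mobius_le_one hw hμ
  calc 1 - ‖mobius w μ‖ ≤ 1 - ‖mobius w μ‖ ^ 2 := by nlinarith [norm_nonneg (mobius w μ)]
    _ = (1 - ‖w‖ ^ 2) * (1 - ‖μ‖ ^ 2) / ‖1 - starRingEnd ℂ w * μ‖ ^ 2 :=
      one_sub_norm_mobius_sq hw hμ
    _ ≤ (1 - ‖w‖ ^ 2) * (1 - ‖μ‖ ^ 2) / (1 - ‖μ‖) ^ 2 := by
      gcongr
      · exact mul_nonneg (by nlinarith) (by nlinarith)
      · exact one_sub_norm_le_norm_one_sub_conj_mul hw.le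
    _ = (1 - ‖w‖) * ((1 + ‖w‖) * (1 + ‖μ‖) / (1 - ‖μ‖)) := by field_simp; ring
    _ ≤ (1 - ‖w‖) * (4 / (1 - ‖μ‖)) := by
      gcongr
      nlinarith

end Mobius

section ZeroSet

variable {Λ : Multiset ℂ} {w : ℂ}

lemma sum_one_sub_norm_mobius_nonneg (hΛ : ∀ μ ∈ Λ, ‖μ‖ < 1) (hw : ‖w‖ < 1) :
    0 ≤ (Λ.map fun μ => 1 - ‖mobius w μ‖).sum :=
  Multiset.sum_nonneg <| Multiset.forall_mem_map_iff.2 fun μ hμ =>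
    sub_nonneg.2 (norm_mobius_le_one hw (hΛ μ hμ))

lemma sum_one_sub_norm_mobius_le (hΛ : ∀ μ ∈ Λ, ‖μ‖ < 1) (hw : ‖w‖ < 1) :
    (Λ.map fun μ => 1 - ‖mobius w μ‖).sum ≤ (1 - ‖w‖) * (Λ.map fun μ => 4 / (1 - ‖μ‖)).sum := by
  rw [← Multiset.sum_map_mul_left]
  exact Multiset.sum_map_le_sum_map _ _ fun μ hμ => one_sub_norm_mobius_le hw (hΛ μ hμ)

lemma sum_four_div_one_sub_norm_nonneg (hΛ : ∀ μ ∈ Λ, ‖μ‖ < 1) :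
    0 ≤ (Λ.map fun μ => 4 / (1 - ‖μ‖)).sum :=
  Multiset.sum_nonneg <| Multiset.forall_mem_map_iff.2 fun μ hμ =>
    div_nonneg zero_le_four (sub_nonneg.2 (hΛ μ hμ).le)

end ZeroSet

/-- Given a sequence of finite Blaschke products `B_N` (encoded by the multisets `Λ N`
of their zeros, lying in the unit disk), there are radii `r_N ∈ (0,1)` such that for any
`w_N ∈ 𝔻` with `|w_N| ≥ r_N` there are unimodular constants `ζ_N` making the product
`∏_N ζ_N (B_N ∘ β_{w_N})` converge, i.e. the combined zero sequence (consisting of the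
points `β_{w_N}(λ)`, `λ` a zero of `B_N`) satisfies the Blaschke condition. -/
theorem blaschke_product_of_composed_factors
    (Λ : ℕ → Multiset ℂ) (hball : ∀ N, ∀ μ ∈ Λ N, ‖μ‖ < 1) :
    ∃ r : ℕ → ℝ, (∀ N, 0 < r N ∧ r N < 1) ∧
      ∀ w : ℕ → ℂ, (∀ N, ‖w N‖ < 1) → (∀ N, r N ≤ ‖w N‖) →
        ∃ ζ : ℕ → ℂ, (∀ N, ‖ζ N‖ = 1) ∧
          Summable (fun N => ((Λ N).map (fun μ => 1 - ‖mobius (w N) μ‖)).sum) := by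
  set C : ℕ → ℝ := fun N => ((Λ N).map fun μ => 4 / (1 - ‖μ‖)).sum
  have hC (N : ℕ) : 0 ≤ C N := sum_four_div_one_sub_norm_nonneg (hball N)
  have hε (N : ℕ) : 0 < (1 / 2 : ℝ) ^ N / (C N + 2) ∧ (1 / 2 : ℝ) ^ N / (C N + 2) ≤ 1 / 2 := by
    have := hC N
    refine ⟨by positivity, ?_⟩
    rw [div_le_iff₀ (by positivity)]
    nlinarith [pow_le_one₀ (n := N) (by norm_num : (0 : ℝ) ≤ 1 / 2) (by norm_num)]
  refine ⟨fun N => 1 - (1 / 2) ^ N / (C N + 2), fun N => ⟨by linarith [hε N], by linarith [hε N]⟩,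
    fun w hw hrw => ⟨fun _ => 1, fun _ => norm_one, ?_⟩⟩
  refine summable_geometric_two.of_nonneg_of_le
    (fun N => sum_one_sub_norm_mobius_nonneg (hball N) (hw N)) fun N => ?_
  have hC' := hC N
  calc _ ≤ (1 - ‖w N‖) * C N := sum_one_sub_norm_mobius_le (hball N) (hw N)
    _ ≤ (1 / 2) ^ N / (C N + 2) * C N := by gcongr; linarith [hrw N]
    _ ≤ (1 / 2) ^ N := by
      rw [div_mul_eq_mul_div, div_le_iff₀ (by positivity)]
      gcongr; linarith
end

section
/- For every δ ∈ (0,1) and every N ≥ 1, there exist families {a_l}_{l=0}^N and {c_l}_{l=0}^N of numbers in (0, δ^{1/(N+1)}) such that the 2^{N+1} diagonal entries of the tensor product matrix D(a₀,c₀) ⊗ D(a₁,c₁) ⊗ ⋯ ⊗ D(a_N,c_N) all lie in (0,δ) and are pairwise distinct, where D(a,c) denotes the 2×2 diagonal matrix diag(a,c). -/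
lemma geom_two_lt (n : ℕ) : (∑ i ∈ Finset.range n, 2 ^ i) < 2 ^ n := by
  induction n with
  | zero => simp
  | succ k ih => rw [Finset.sum_range_succ, pow_succ]; omega

lemma two_pow_sum_lt (n : ℕ) (s : Fin n → Bool) :
    (∑ l : Fin n, if s l then 2 ^ (l : ℕ) else 0) < 2 ^ n := by
  calc (∑ l : Fin n, if s l then 2 ^ (l : ℕ) else 0)
      ≤ ∑ l : Fin n, 2 ^ (l : ℕ) := by
        apply Finset.sum_le_sum; intro i _; split <;> simp
    _ = ∑ i ∈ Finset.range n, 2 ^ i := Fin.sum_univ_eq_sum_range _ n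
    _ < 2 ^ n := geom_two_lt n

lemma bits_inj : ∀ (n : ℕ) (s t : Fin n → Bool),
    (∑ l : Fin n, if s l then 2 ^ (l : ℕ) else 0) =
      (∑ l : Fin n, if t l then 2 ^ (l : ℕ) else 0) → s = t := by
  intro n
  induction n with
  | zero => intro s t _; funext l; exact l.elim0
  | succ k ih =>
    intro s t h
    rw [Fin.sum_univ_castSucc, Fin.sum_univ_castSucc] at h
    simp only [Fin.coe_castSucc, Fin.val_last] at h
    have hs := two_pow_sum_lt k (fun l => s l.castSucc)
    have ht := two_pow_sum_lt k (fun l => t l.castSucc)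
    have hlast : s (Fin.last k) = t (Fin.last k) := by
      cases hb : s (Fin.last k) <;> cases hb' : t (Fin.last k) <;> rw [hb, hb'] at h <;>
        first
        | rfl
        | (simp only [reduceIte, Bool.false_eq_true] at h; omega)
    rw [← hlast] at h
    have hsum : (∑ l : Fin k, if s l.castSucc then 2 ^ (l : ℕ) else 0) =
        ∑ l : Fin k, if t l.castSucc then 2 ^ (l : ℕ) else 0 := by
      cases hb : s (Fin.last k) <;> rw [hb] at h <;>
        simp only [reduceIte, Bool.false_eq_true, add_zero] at h <;> omega
    have heq := ih (fun l => s l.castSucc) (fun l => t l.castSucc) hsum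
    funext l
    refine Fin.lastCases hlast (fun i => ?_) l
    exact congrFun heq i

/-- For every `δ ∈ (0,1)` and `N ≥ 1` there are families `{a_l}, {c_l} ⊂ (0, δ^{1/(N+1)})`
such that all `2^{N+1}` diagonal entries of `D(a₀,c₀) ⊗ ⋯ ⊗ D(a_N,c_N)` (i.e. all products
`x₀⋯x_N` with `x_l ∈ {a_l, c_l}`) lie in `(0,δ)` and are pairwise distinct. -/
theorem distinct_tensor_diagonal (δ : ℝ) (hδ0 : 0 < δ) (hδ1 : δ < 1) (N : ℕ) (hN : 1 ≤ N) :
    ∃ a c : Fin (N + 1) → ℝ,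
      (∀ l, a l ∈ Set.Ioo (0 : ℝ) (δ ^ (1 / (N + 1 : ℝ)))) ∧
      (∀ l, c l ∈ Set.Ioo (0 : ℝ) (δ ^ (1 / (N + 1 : ℝ)))) ∧
      (∀ s : Fin (N + 1) → Bool,
        (∏ l, (if s l then a l else c l)) ∈ Set.Ioo (0 : ℝ) δ) ∧
      Function.Injective (fun s : Fin (N + 1) → Bool => ∏ l, (if s l then a l else c l)) := by
  set r : ℝ := δ ^ (1 / (N + 1 : ℝ)) with hr
  have hr0 : 0 < r := Real.rpow_pos_of_pos hδ0 _
  have hrpow : r ^ (N + 1) = δ := by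
    rw [hr, ← Real.rpow_natCast (δ ^ (1 / (N + 1 : ℝ))) (N + 1),
      ← Real.rpow_mul hδ0.le]
    have h1 : (1 / (N + 1 : ℝ)) * ((N + 1 : ℕ) : ℝ) = 1 := by
      push_cast
      field_simp
    rw [h1, Real.rpow_one]
  have half_pos : (0 : ℝ) < 1 / 2 := by norm_num
  have half_lt_one : (1 : ℝ) / 2 < 1 := by norm_num
  set A : Fin (N + 1) → ℝ := fun l => r * (1 / 2) ^ (2 ^ (l : ℕ)) with hA
  set C : Fin (N + 1) → ℝ := fun l => r * (1 / 2) ^ (2 ^ ((l : ℕ) + 1)) with hC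
  set E : (Fin (N + 1) → Bool) → ℕ :=
    fun s => ∑ l : Fin (N + 1), if s l then 2 ^ (l : ℕ) else 2 ^ ((l : ℕ) + 1) with hE
  have key : ∀ s : Fin (N + 1) → Bool,
      (∏ l, (if s l then A l else C l)) = δ * (1 / 2 : ℝ) ^ E s := by
    intro s
    have hterm : ∀ l : Fin (N + 1),
        (if s l then A l else C l)
        = r * (1 / 2) ^ (if s l then 2 ^ (l : ℕ) else 2 ^ ((l : ℕ) + 1)) := by
      intro l; split <;> rfl
    rw [Finset.prod_congr rfl (fun l _ => hterm l), Finset.prod_mul_distrib,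
      Finset.prod_const, Finset.card_univ, Fintype.card_fin,
      Finset.prod_pow_eq_pow_sum, hrpow, hE]
  have hEpos : ∀ s : Fin (N + 1) → Bool, 0 < E s := by
    intro s
    apply Finset.sum_pos
    · intro i _; split <;> positivity
    · exact Finset.univ_nonempty
  refine ⟨A, C, ?_, ?_, ?_, ?_⟩
  · intro l
    refine ⟨by rw [hA]; positivity, ?_⟩
    have h1 : ((1 : ℝ) / 2) ^ (2 ^ (l : ℕ)) < 1 :=
      pow_lt_one₀ half_pos.le half_lt_one (by positivity)
    calc A l < r * 1 := mul_lt_mul_of_pos_left h1 hr0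
      _ = r := mul_one r
  · intro l
    refine ⟨by rw [hC]; positivity, ?_⟩
    have h1 : ((1 : ℝ) / 2) ^ (2 ^ ((l : ℕ) + 1)) < 1 :=
      pow_lt_one₀ half_pos.le half_lt_one (by positivity)
    calc C l < r * 1 := mul_lt_mul_of_pos_left h1 hr0
      _ = r := mul_one r
  · intro s
    rw [key s]
    refine ⟨by positivity, ?_⟩
    have h1 : ((1 : ℝ) / 2) ^ E s < 1 :=
      pow_lt_one₀ half_pos.le half_lt_one (hEpos s).ne'
    calc δ * (1 / 2 : ℝ) ^ E s < δ * 1 := mul_lt_mul_of_pos_left h1 hδ0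
      _ = δ := mul_one δ
  · intro s t hst
    simp only [key s, key t] at hst
    have hE' : E s = E t := by
      have h2 : ((1 : ℝ) / 2) ^ E s = (1 / 2) ^ E t :=
        mul_left_cancel₀ hδ0.ne' hst
      exact (pow_right_injective₀ half_pos half_lt_one.ne) h2
    have hbit : (∑ l : Fin (N + 1), if s l then 2 ^ (l : ℕ) else 0) =
        ∑ l : Fin (N + 1), if t l then 2 ^ (l : ℕ) else 0 := by
      have hcs : E s + (∑ l : Fin (N + 1), if s l then 2 ^ (l : ℕ) else 0)
          = ∑ l : Fin (N + 1), 2 ^ ((l : ℕ) + 1) := by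
        rw [hE, ← Finset.sum_add_distrib]
        refine Finset.sum_congr rfl fun l _ => ?_
        split
        · rw [pow_succ]; omega
        · omega
      have hct : E t + (∑ l : Fin (N + 1), if t l then 2 ^ (l : ℕ) else 0)
          = ∑ l : Fin (N + 1), 2 ^ ((l : ℕ) + 1) := by
        rw [hE, ← Finset.sum_add_distrib]
        refine Finset.sum_congr rfl fun l _ => ?_
        split
        · rw [pow_succ]; omega
        · omega
      omega
    exact bits_inj (N + 1) s t hbit
end

section
/- Define q_n(λ,ν) = Σ_{k=0}^{n-1} λ^{n-1-k} ν^k for n ≥ 1 and q₀ = 0. Suppose N ≥ 1, 0 < δ < 1, and p is a polynomial with Fourier coefficients p̂(n) = 0 for 0 ≤ n ≤ N+1. Then for all λ, ν ∈ ℂ with |λ| ≤ δ, |ν| ≤ δ, and all 0 ≤ k ≤ N, |Σ_{n ≥ N+2} p̂(n) · (n!/(k!(n-k)!)) · q_{n-k}(λ, ν)| ≤ ((k+1)(k+2)/(1-δ)^{k+3}) · δ · ||p||_∞. -/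
open Metric

/-- `q_n(λ,ν) = Σ_{k=0}^{n-1} λ^{n-1-k} ν^k` (so `q_0 = 0`). -/
noncomputable def qpoly (n : ℕ) (lam nu : ℂ) : ℂ :=
  ∑ k ∈ Finset.range n, lam ^ (n - 1 - k) * nu ^ k

/-- Cauchy estimate at radius `r < 1` via averaging over roots of unity. -/
lemma coeff_r_bound (p : Polynomial ℂ) (M : ℝ)
    (hM : ∀ z ∈ ball (0 : ℂ) 1, ‖p.eval z‖ ≤ M) (n : ℕ) (r : ℝ)
    (hr0 : 0 ≤ r) (hr1 : r < 1) : ‖p.coeff n‖ * r ^ n ≤ M := by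
  have hM0 : 0 ≤ M := le_trans (norm_nonneg _) (hM 0 (by simp))
  by_cases hdeg : p.natDegree < n
  · rw [p.coeff_eq_zero_of_natDegree_lt hdeg]
    simpa using hM0
  push_neg at hdeg
  set m : ℕ := p.natDegree + n + 1 with hm
  have hmpos : 0 < m := by omega
  set ω : ℂ := Complex.exp (2 * Real.pi * Complex.I / m) with hω
  have hprim : IsPrimitiveRoot ω m := Complex.isPrimitiveRoot_exp m (by omega)
  have hωm : ω ^ m = 1 := hprim.pow_eq_one
  have hnorm : ‖ω‖ = 1 := by
    have h1 : ‖ω‖ ^ m = 1 := by rw [← norm_pow, hωm, norm_one]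
    rcases lt_trichotomy ‖ω‖ 1 with h | h | h
    · have := pow_lt_one₀ (norm_nonneg ω) h hmpos.ne'
      linarith
    · exact h
    · have := one_lt_pow₀ h hmpos.ne'
      linarith
  have inner : ∀ i ∈ Finset.range (p.natDegree + 1),
      ∑ j ∈ Finset.range m, (ω ^ (i + (m - n))) ^ j
        = if i = n then (m : ℂ) else 0 := by
    intro i hi
    simp only [Finset.mem_range] at hi
    by_cases hin : i = n
    · subst hin
      have hmm : i + (m - i) = m := by omega
      simp [hmm, hωm]
    · rw [if_neg hin]
      have hne : ω ^ (i + (m - n)) ≠ 1 := by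
        intro h
        have hd := (hprim.pow_eq_one_iff_dvd _).mp h
        have hpos : 0 < i + (m - n) := by omega
        have hle := Nat.le_of_dvd hpos hd
        have h2 : m ∣ (i + (m - n) - m) := Nat.dvd_sub hd dvd_rfl
        have h3 : i + (m - n) - m < m := by omega
        have h4 : i + (m - n) - m = 0 := Nat.eq_zero_of_dvd_of_lt h2 h3
        omega
      have hpow : (ω ^ (i + (m - n))) ^ m = 1 := by
        rw [← pow_mul, mul_comm, pow_mul, hωm, one_pow]
      rw [geom_sum_eq hne, hpow]
      simp
  have key : ∑ j ∈ Finset.range m, p.eval ((r : ℂ) * ω ^ j) * ω ^ (j * (m - n))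
      = (m : ℂ) * (p.coeff n * (r : ℂ) ^ n) := by
    have expand : ∀ j, p.eval ((r : ℂ) * ω ^ j) * ω ^ (j * (m - n))
        = ∑ i ∈ Finset.range (p.natDegree + 1),
            p.coeff i * (r : ℂ) ^ i * (ω ^ (i + (m - n))) ^ j := by
      intro j
      rw [Polynomial.eval_eq_sum_range, Finset.sum_mul]
      refine Finset.sum_congr rfl fun i _ => ?_
      calc p.coeff i * ((r : ℂ) * ω ^ j) ^ i * ω ^ (j * (m - n))
          = p.coeff i * (r : ℂ) ^ i * (ω ^ (j * i) * ω ^ (j * (m - n))) := by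
            rw [mul_pow, ← pow_mul]; ring
        _ = p.coeff i * (r : ℂ) ^ i * (ω ^ (i + (m - n))) ^ j := by
            rw [← pow_add, ← pow_mul]
            congr 2
            ring
    calc ∑ j ∈ Finset.range m, p.eval ((r : ℂ) * ω ^ j) * ω ^ (j * (m - n))
        = ∑ j ∈ Finset.range m, ∑ i ∈ Finset.range (p.natDegree + 1),
            p.coeff i * (r : ℂ) ^ i * (ω ^ (i + (m - n))) ^ j :=
          Finset.sum_congr rfl fun j _ => expand j
      _ = ∑ i ∈ Finset.range (p.natDegree + 1), ∑ j ∈ Finset.range m,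
            p.coeff i * (r : ℂ) ^ i * (ω ^ (i + (m - n))) ^ j := Finset.sum_comm
      _ = ∑ i ∈ Finset.range (p.natDegree + 1),
            p.coeff i * (r : ℂ) ^ i * ∑ j ∈ Finset.range m, (ω ^ (i + (m - n))) ^ j :=
          Finset.sum_congr rfl fun i _ => (Finset.mul_sum _ _ _).symm
      _ = ∑ i ∈ Finset.range (p.natDegree + 1),
            p.coeff i * (r : ℂ) ^ i * (if i = n then (m : ℂ) else 0) :=
          Finset.sum_congr rfl fun i hi => by rw [inner i hi]
      _ = (m : ℂ) * (p.coeff n * (r : ℂ) ^ n) := by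
          rw [Finset.sum_eq_single n]
          · simp; ring
          · intro b _ hb; simp [hb]
          · intro hn; exact absurd (Finset.mem_range.mpr (by omega)) hn
  have hbound : ‖∑ j ∈ Finset.range m, p.eval ((r : ℂ) * ω ^ j) * ω ^ (j * (m - n))‖
      ≤ (m : ℝ) * M := by
    refine (norm_sum_le _ _).trans ?_
    have hterm : ∀ j ∈ Finset.range m, ‖p.eval ((r : ℂ) * ω ^ j) * ω ^ (j * (m - n))‖ ≤ M := by
      intro j _
      rw [norm_mul, norm_pow, hnorm, one_pow, mul_one]
      apply hM
      rw [mem_ball_zero_iff, norm_mul, norm_pow, hnorm, one_pow, mul_one,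
        Complex.norm_real, Real.norm_eq_abs, abs_of_nonneg hr0]
      exact hr1
    calc ∑ j ∈ Finset.range m, ‖p.eval ((r : ℂ) * ω ^ j) * ω ^ (j * (m - n))‖
        ≤ ∑ _j ∈ Finset.range m, M := Finset.sum_le_sum hterm
      _ = (m : ℝ) * M := by simp [mul_comm]
  rw [key, norm_mul, norm_mul, norm_pow, Complex.norm_natCast, Complex.norm_real,
    Real.norm_eq_abs, abs_of_nonneg hr0] at hbound
  have hmR : (0 : ℝ) < (m : ℝ) := by exact_mod_cast hmpos
  exact le_of_mul_le_mul_left hbound hmR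
/-- Cauchy estimate: coefficients are bounded by the sup on the open unit ball. -/
lemma coeff_bound (p : Polynomial ℂ) (M : ℝ)
    (hM : ∀ z ∈ ball (0 : ℂ) 1, ‖p.eval z‖ ≤ M) (n : ℕ) : ‖p.coeff n‖ ≤ M := by
  have tend : Filter.Tendsto (fun r : ℝ => ‖p.coeff n‖ * r ^ n) (nhdsWithin 1 (Set.Iio 1))
      (nhds (‖p.coeff n‖ * 1 ^ n)) := by
    apply Filter.Tendsto.mono_left _ nhdsWithin_le_nhds
    exact (continuous_const.mul (continuous_pow n)).tendsto 1
  have hev : ∀ᶠ r in nhdsWithin (1 : ℝ) (Set.Iio 1), ‖p.coeff n‖ * r ^ n ≤ M := by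
    filter_upwards [Ioo_mem_nhdsLT_of_mem (show (1 : ℝ) ∈ Set.Ioc 0 1 by norm_num)] with r hr
    exact coeff_r_bound p M hM n r hr.1.le hr.2
  have := le_of_tendsto tend hev
  simpa using this

lemma qpoly_norm_le (m : ℕ) (δ : ℝ) (hδ0 : 0 ≤ δ) (lam nu : ℂ)
    (hlam : ‖lam‖ ≤ δ) (hnu : ‖nu‖ ≤ δ) :
    ‖qpoly m lam nu‖ ≤ (m : ℝ) * δ ^ (m - 1) := by
  refine (norm_sum_le _ _).trans ?_
  have hterm : ∀ j ∈ Finset.range m, ‖lam ^ (m - 1 - j) * nu ^ j‖ ≤ δ ^ (m - 1) := by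
    intro j hj
    simp only [Finset.mem_range] at hj
    rw [norm_mul, norm_pow, norm_pow]
    calc ‖lam‖ ^ (m - 1 - j) * ‖nu‖ ^ j ≤ δ ^ (m - 1 - j) * δ ^ j := by
          gcongr
      _ = δ ^ (m - 1) := by rw [← pow_add]; congr 1; omega
  calc ∑ j ∈ Finset.range m, ‖lam ^ (m - 1 - j) * nu ^ j‖
      ≤ ∑ _j ∈ Finset.range m, δ ^ (m - 1) := Finset.sum_le_sum hterm
    _ = (m : ℝ) * δ ^ (m - 1) := by simp [mul_comm]

/-- If `p` is a polynomial with `p̂(n) = 0` for `n ≤ N+1`, then for `|λ|, |ν| ≤ δ < 1` and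
`0 ≤ k ≤ N`, `|Σ_{n ≥ N+2} p̂(n) binom(n,k) q_{n-k}(λ,ν)| ≤ (k+1)(k+2)/(1-δ)^{k+3} · δ ‖p‖_∞`
(the sum over `n ≥ N+2` being the finite sum over the support of `p`). -/
theorem qpoly_tail_estimate (N : ℕ) (hN : 1 ≤ N) (δ : ℝ) (hδ0 : 0 < δ) (hδ1 : δ < 1)
    (p : Polynomial ℂ) (hp : ∀ n ≤ N + 1, p.coeff n = 0)
    (lam nu : ℂ) (hlam : ‖lam‖ ≤ δ) (hnu : ‖nu‖ ≤ δ)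
    (k : ℕ) (hk : k ≤ N)
    (M : ℝ) (hM : ∀ z ∈ ball (0 : ℂ) 1, ‖p.eval z‖ ≤ M) :
    ‖∑ n ∈ p.support, p.coeff n * (n.choose k : ℂ) * qpoly (n - k) lam nu‖ ≤
      ((k + 1) * (k + 2) / (1 - δ) ^ (k + 3)) * δ * M := by
  have hM0 : 0 ≤ M := le_trans (norm_nonneg _) (hM 0 (by simp))
  have hd1 : 0 < 1 - δ := by linarith
  set G : ℕ → ℝ := fun n => ((n.choose (k + 2) : ℝ)) * δ ^ (n - (k + 2)) with hG
  have hGnn : ∀ n, 0 ≤ G n := fun n => by positivity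
  -- the series
  have hδn : ‖δ‖ < 1 := by rw [Real.norm_eq_abs, abs_of_pos hδ0]; exact hδ1
  have hs : HasSum (fun i : ℕ => ((i + (k + 2)).choose (k + 2) : ℝ) * δ ^ i)
      (1 / (1 - δ) ^ (k + 3)) := by
    have := hasSum_choose_mul_geometric_of_norm_lt_one (k + 2) hδn
    convert this using 2
  have hGsum : HasSum G (1 / (1 - δ) ^ (k + 3)) := by
    have h2 : (fun i : ℕ => G (i + (k + 2))) =
        fun i : ℕ => ((i + (k + 2)).choose (k + 2) : ℝ) * δ ^ i := by
      funext i; simp [hG]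
    have h3 := (hasSum_nat_add_iff (f := G) (k + 2)).mp (h2 ▸ hs)
    have h4 : ∑ i ∈ Finset.range (k + 2), G i = 0 := by
      apply Finset.sum_eq_zero
      intro i hi
      simp only [Finset.mem_range] at hi
      simp [hG, Nat.choose_eq_zero_of_lt hi]
    rwa [h4, add_zero] at h3
  -- termwise estimate
  have hterm : ∀ n ∈ p.support,
      ‖p.coeff n * (n.choose k : ℂ) * qpoly (n - k) lam nu‖
        ≤ (M * δ * ((k + 1) * (k + 2))) * G n := by
    intro n hn
    have hcne : p.coeff n ≠ 0 := Polynomial.mem_support_iff.mp hn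
    have hnN : N + 2 ≤ n := by
      by_contra h
      exact hcne (hp n (by omega))
    have hnk : k + 2 ≤ n := by omega
    have hq : ‖qpoly (n - k) lam nu‖ ≤ ((n - k : ℕ) : ℝ) * δ ^ (n - k - 1) :=
      qpoly_norm_le (n - k) δ hδ0.le lam nu hlam hnu
    have hc : ‖p.coeff n‖ ≤ M := coeff_bound p M hM n
    have hchoose : (n.choose k * (n - k) : ℕ) ≤ (k + 1) * (k + 2) * n.choose (k + 2) := by
      have e1 : n.choose (k + 1) * (k + 1) = n.choose k * (n - k) :=
        Nat.choose_succ_right_eq n k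
      have e2 : n.choose (k + 2) * (k + 2) = n.choose (k + 1) * (n - (k + 1)) :=
        Nat.choose_succ_right_eq n (k + 1)
      have h5 : n.choose (k + 1) ≤ n.choose (k + 2) * (k + 2) := by
        rw [e2]
        have : 1 ≤ n - (k + 1) := by omega
        nlinarith [Nat.zero_le (n.choose (k + 1))]
      calc n.choose k * (n - k) = n.choose (k + 1) * (k + 1) := e1.symm
        _ ≤ (n.choose (k + 2) * (k + 2)) * (k + 1) := by
            exact Nat.mul_le_mul_right _ h5
        _ = (k + 1) * (k + 2) * n.choose (k + 2) := by ring
    have hpow : δ ^ (n - k - 1) = δ * δ ^ (n - (k + 2)) := by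
      have : n - k - 1 = (n - (k + 2)) + 1 := by omega
      rw [this, pow_succ]
      ring
    calc ‖p.coeff n * (n.choose k : ℂ) * qpoly (n - k) lam nu‖
        = ‖p.coeff n‖ * (n.choose k : ℝ) * ‖qpoly (n - k) lam nu‖ := by
          rw [norm_mul, norm_mul, Complex.norm_natCast]
      _ ≤ M * (n.choose k : ℝ) * (((n - k : ℕ) : ℝ) * δ ^ (n - k - 1)) := by
          gcongr
      _ = ((n.choose k * (n - k) : ℕ) : ℝ) * δ ^ (n - k - 1) * M := by
          push_cast; ring
      _ ≤ (((k + 1) * (k + 2) * n.choose (k + 2) : ℕ) : ℝ) * δ ^ (n - k - 1) * M := by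
          have := (Nat.cast_le (α := ℝ)).mpr hchoose
          gcongr
      _ = (M * δ * ((k + 1) * (k + 2))) * G n := by
          rw [hpow]
          simp only [hG]
          push_cast
          ring
  -- combine
  have hsum1 : ‖∑ n ∈ p.support, p.coeff n * (n.choose k : ℂ) * qpoly (n - k) lam nu‖
      ≤ (M * δ * ((k + 1) * (k + 2))) * ∑ n ∈ p.support, G n := by
    refine (norm_sum_le _ _).trans ?_
    rw [Finset.mul_sum]
    exact Finset.sum_le_sum hterm
  have hsum2 : ∑ n ∈ p.support, G n ≤ 1 / (1 - δ) ^ (k + 3) := by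
    rw [← hGsum.tsum_eq]
    exact Summable.sum_le_tsum _ (fun i _ => hGnn i) hGsum.summable
  calc ‖∑ n ∈ p.support, p.coeff n * (n.choose k : ℂ) * qpoly (n - k) lam nu‖
      ≤ (M * δ * ((k + 1) * (k + 2))) * ∑ n ∈ p.support, G n := hsum1
    _ ≤ (M * δ * ((k + 1) * (k + 2))) * (1 / (1 - δ) ^ (k + 3)) := by
        gcongr
    _ = ((k + 1) * (k + 2) / (1 - δ) ^ (k + 3)) * δ * M := by
        field_simp
end

section
/- Suppose a Hilbert space H has finite dimension d with orthonormal basis {e_j}, and D, D_⋆ are the diagonal operators De_j = λ_j e_j, D_⋆ e_j = ν_j e_j with λ_j, ν_j ∈ 𝔻. Fix N ≥ 1 and an arbitrary operator A on ⊕_{n=0}^N H. Let S be the truncated shift on ⊕_{n=0}^N H (block nilpotent Jordan shift of index N+1), T₀ = ⊕_{n=0}^N D + S, T₁ = ⊕_{n=0}^N D_⋆ + S*, and T = [[T₁, A],[0, T₀]]. If the λ_j are pairwise distinct, the ν_j are pairwise distinct, and λ_j ≠ ν_k for all j,k, then T is similar to T₀ ⊕ T₁, hence similar to the model operator T_B where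 B = ∏_{j=1}^d b_{λ_j}^{N+1} b_{ν_j}^{N+1}. -/
/-!
Write `T = [[T₁, A], [0, T₀]]`. Every eigenvalue of `T₀ = ⊕D + S` is an eigenvalue of `D`
(look at the last nonzero block of an eigenvector), and likewise every eigenvalue of
`T₁ = ⊕D⋆ + S*` is one of `D⋆` (look at the first nonzero block). So `σ(T₁)` and `σ(T₀)` are
disjoint, and the Sylvester equation `T₁ Y - Y T₀ = A` is solvable: if `T₁ Y = Y T₀` then
`p(T₁) Y = Y p(T₀) = 0` for the minimal polynomial `p` of `T₀`, and `p(T₁)` is invertible by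
the spectral mapping theorem. The shear `(x, y) ↦ (x + Y y, y)` then conjugates `T` to
`T₁ ⊕ T₀`. Finally, reversing the order of the blocks of `T₁` turns the adjoint shift into the
shift, and a relabelling of coordinates identifies `T₁ ⊕ T₀` with the Jordan operator `J`.
-/

open Polynomial Module

theorem SemiconjBy.aeval {R A : Type*} [CommSemiring R] [Semiring A] [Algebra R A] {a b y : A}
    (h : SemiconjBy y b a) (p : R[X]) : SemiconjBy y (aeval b p) (aeval a p) := by
  induction p using Polynomial.induction_on with
  | C c => simp [SemiconjBy, Algebra.commutes]
  | add p q hp hq => simpa only [map_add] using hp.add_right hq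
  | monomial n c ih =>
    simpa only [pow_succ, ← mul_assoc, map_mul, aeval_X] using ih.mul_right h

section Sylvester

variable {K V : Type*} [Field K] [IsAlgClosed K] [AddCommGroup V] [Module K V]
  [FiniteDimensional K V] {a b : End K V}

theorem Module.End.isUnit_aeval_minpoly_of_disjoint_spectrum
    (h : Disjoint (spectrum K a) (spectrum K b)) : IsUnit (aeval a (minpoly K b)) := by
  nontriviality End K V
  rw [← spectrum.zero_notMem_iff K,
    spectrum.map_polynomial_aeval_of_nonempty a _
      (spectrum.nonempty_of_isAlgClosed_of_finiteDimensional K a)]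
  rintro ⟨μ, hμa, hμb⟩
  exact h.notMem_of_mem_left hμa
    (End.hasEigenvalue_iff_mem_spectrum.mp (End.hasEigenvalue_of_isRoot hμb))

theorem Module.End.surjective_mulLeft_sub_mulRight_of_disjoint_spectrum (h : Disjoint (spectrum K a) (spectrum K b)) :
    Function.Surjective (LinearMap.mulLeft K a - LinearMap.mulRight K b) := by
  rw [← LinearMap.injective_iff_surjective, injective_iff_map_eq_zero]
  intro y hy
  have hy' : SemiconjBy y b a := (sub_eq_zero.mp hy).symm
  have hpy := hy'.aeval (minpoly K b)
  rw [SemiconjBy, minpoly.aeval, mul_zero] at hpy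
  exact (isUnit_aeval_minpoly_of_disjoint_spectrum h).mul_right_eq_zero.mp hpy.symm

end Sylvester

theorem exists_linearEquiv_prod_conj_of_sub_eq {R M N : Type*} [Ring R] [AddCommGroup M]
    [Module R M] [AddCommGroup N] [Module R N] {a : M →ₗ[R] M} {b : N →ₗ[R] N} {c y : N →ₗ[R] M}
    (hy : ∀ x, a (y x) - y (b x) = c x) :
    ∃ e : (M × N) ≃ₗ[R] M × N, ∀ v, e (a v.1 + c v.2, b v.2) = (a (e v).1, b (e v).2) := by
  let shear := LinearMap.inl R M N ∘ₗ y ∘ₗ LinearMap.snd R M N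
  refine ⟨.ofLinearMap (LinearMap.id + shear) (LinearMap.id - shear) (by ext <;> simp [shear])
    (by ext <;> simp [shear]), fun v => ?_⟩
  simp [shear, ← hy]
  abel

theorem exists_continuousLinearEquiv_conj_of_disjoint_spectrum {𝕜 V W : Type*}
    [NontriviallyNormedField 𝕜] [CompleteSpace 𝕜] [IsAlgClosed 𝕜] [NormedAddCommGroup V]
    [NormedSpace 𝕜 V] [FiniteDimensional 𝕜 V] [NormedAddCommGroup W] [NormedSpace 𝕜 W]
    {a b : V →L[𝕜] V} (h : Disjoint (spectrum 𝕜 a.toLinearMap) (spectrum 𝕜 b.toLinearMap))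
    (c : V →L[𝕜] V) (e : (V × V) ≃ₗ[𝕜] W) {J : W → W} (he : ∀ u, e (a u.1, b u.2) = J (e u)) :
    ∃ X : (V × V) ≃L[𝕜] W, ∀ v, X (a v.1 + c v.2, b v.2) = J (X v) := by
  obtain ⟨y, hy⟩ := End.surjective_mulLeft_sub_mulRight_of_disjoint_spectrum h c.toLinearMap
  obtain ⟨s, hs⟩ := exists_linearEquiv_prod_conj_of_sub_eq fun x => LinearMap.congr_fun hy x
  refine ⟨(s.trans e).toContinuousLinearEquiv, fun v => ?_⟩
  simpa [← he] using congrArg e (hs v)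

section EuclideanSpace

variable {𝕜 ι F : Type*} [RCLike 𝕜] [Fintype ι] [DecidableEq ι]
  [FunLike F (EuclideanSpace 𝕜 ι) (EuclideanSpace 𝕜 ι)]
  [LinearMapClass F 𝕜 (EuclideanSpace 𝕜 ι) (EuclideanSpace 𝕜 ι)]

theorem EuclideanSpace.apply_eq_sum_mul_apply_single (L : F) (x : EuclideanSpace 𝕜 ι) (i : ι) :
    L x i = ∑ k, x k * L (EuclideanSpace.single k 1) i := by
  conv_lhs => rw [← (EuclideanSpace.basisFun ι 𝕜).sum_repr x]
  simp [map_sum, map_smul]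

theorem EuclideanSpace.apply_eq_mul_of_apply_single_eq_smul {L : F} {c : ι → 𝕜}
    (hL : ∀ k, L (EuclideanSpace.single k 1) = c k • EuclideanSpace.single k 1)
    (x : EuclideanSpace 𝕜 ι) (i : ι) : L x i = c i * x i := by
  simp [apply_eq_sum_mul_apply_single L x i, hL, mul_comm]

theorem EuclideanSpace.apply_apply_eq_mul_add {κ : Type*} {p : ENNReal} {D : F} {c : ι → 𝕜}
    (hD : ∀ k, D (EuclideanSpace.single k 1) = c k • EuclideanSpace.single k 1)
    {T : PiLp p (fun _ : κ => EuclideanSpace 𝕜 ι) → PiLp p (fun _ : κ => EuclideanSpace 𝕜 ι)}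
    {S : PiLp p (fun _ : κ => EuclideanSpace 𝕜 ι) → κ → EuclideanSpace 𝕜 ι}
    (hT : ∀ x n, T x n = D (x n) + S x n) (x : PiLp p (fun _ : κ => EuclideanSpace 𝕜 ι)) (n : κ)
    (i : ι) : T x n i = c i * x n i + S x n i := by
  rw [hT, PiLp.add_apply, apply_eq_mul_of_apply_single_eq_smul hD]

theorem Module.End.HasEigenvalue.exists_eq_of_apply_single_eq_smul
    {L : End 𝕜 (EuclideanSpace 𝕜 ι)} {c : ι → 𝕜}
    (hL : ∀ k, L (EuclideanSpace.single k 1) = c k • EuclideanSpace.single k 1) {μ : 𝕜}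
    (hμ : L.HasEigenvalue μ) : ∃ i, c i = μ := by
  obtain ⟨x, hx⟩ := hμ.exists_hasEigenvector
  obtain ⟨i, hi⟩ : ∃ i, x i ≠ 0 := by
    by_contra! h
    exact hx.2 (PiLp.ext h)
  have hLx : L x i = μ * x i := congrArg (· i) (End.mem_eigenspace_iff.mp hx.1)
  rw [EuclideanSpace.apply_eq_mul_of_apply_single_eq_smul hL] at hLx
  exact ⟨i, mul_right_cancel₀ hi hLx⟩

theorem EuclideanSpace.apply_eq_of_jordan_apply_single {κ G : Type*} [Fintype κ] [DecidableEq κ] {N : ℕ}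
    [FunLike G (EuclideanSpace 𝕜 (ι × κ × Fin (N + 1))) (EuclideanSpace 𝕜 (ι × κ × Fin (N + 1)))]
    [LinearMapClass G 𝕜 (EuclideanSpace 𝕜 (ι × κ × Fin (N + 1)))
      (EuclideanSpace 𝕜 (ι × κ × Fin (N + 1)))] {c : ι → κ → 𝕜} {J : G}
    (hJ : ∀ j s n, J (EuclideanSpace.single (j, s, n) 1) =
      c j s • EuclideanSpace.single (j, s, n) 1 +
        (if 0 < (n : ℕ) then EuclideanSpace.single
          (j, s, ⟨(n : ℕ) - 1, lt_of_le_of_lt (Nat.sub_le _ _) n.isLt⟩) 1 else 0))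
    (x : EuclideanSpace 𝕜 (ι × κ × Fin (N + 1))) (j : ι) (s : κ) (n : Fin (N + 1)) :
    J x (j, s, n) = c j s * x (j, s, n) +
      (if h : (n : ℕ) + 1 < N + 1 then x (j, s, ⟨(n : ℕ) + 1, h⟩) else 0) := by
  have hcoeff : ∀ k, J (EuclideanSpace.single k 1) (j, s, n) =
      (if k = (j, s, n) then c j s else 0) +
        (if h : (n : ℕ) + 1 < N + 1 then (if k = (j, s, ⟨(n : ℕ) + 1, h⟩) then 1 else 0)
          else 0) := by
    rintro ⟨j', s', n'⟩
    rw [hJ]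
    simp only [PiLp.add_apply, PiLp.smul_apply, PiLp.single_apply, smul_eq_mul]
    split_ifs <;>
      simp only [PiLp.single_apply, PiLp.zero_apply, Prod.mk.injEq, Fin.ext_iff] at * <;> grind
  simp only [apply_eq_sum_mul_apply_single, hcoeff, mul_add, Finset.sum_add_distrib]
  split_ifs <;> simp [mul_comm]

end EuclideanSpace

section TruncatedShift

variable {K E : Type*} [CommRing K] [AddCommGroup E] [Module K E] {p : ENNReal} {N : ℕ}
  {T : End K (PiLp p (fun _ : Fin (N + 1) => E))} {D : End K E} {μ : K}

theorem Module.End.HasEigenvalue.of_add_shift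
    (hT : ∀ x n, T x n =
      D (x n) + (if h : (n : ℕ) + 1 < N + 1 then x ⟨(n : ℕ) + 1, h⟩ else 0))
    (hμ : T.HasEigenvalue μ) : D.HasEigenvalue μ := by
  classical
  obtain ⟨x, hx⟩ := hμ.exists_hasEigenvector
  obtain ⟨n₀, hn₀⟩ : ∃ n, x n ≠ 0 := by
    by_contra! h
    exact hx.2 (PiLp.ext h)
  obtain ⟨n, hn, hmax⟩ :=
    Finset.exists_max_image (Finset.univ.filter fun n => x n ≠ 0) id ⟨n₀, by simpa using hn₀⟩
  refine End.hasEigenvalue_of_hasEigenvector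
    ⟨End.mem_eigenspace_iff.mpr ?_, (Finset.mem_filter.mp hn).2⟩
  have hTx : T x n = μ • x n := congrArg (· n) (End.mem_eigenspace_iff.mp hx.1)
  have hnext : (if h : (n : ℕ) + 1 < N + 1 then x ⟨(n : ℕ) + 1, h⟩ else 0) = 0 := by
    split_ifs with h
    · by_contra hne
      have := Fin.le_def.mp (hmax _ (by simpa using hne))
      simp only [id] at this
      omega
    · rfl
  rwa [hT, hnext, add_zero] at hTx

theorem Module.End.HasEigenvalue.of_add_shift_adjoint
    (hT : ∀ x n, T x n = D (x n) + (if 0 < (n : ℕ) then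
      x ⟨(n : ℕ) - 1, lt_of_le_of_lt (Nat.sub_le _ _) n.isLt⟩ else 0))
    (hμ : T.HasEigenvalue μ) : D.HasEigenvalue μ := by
  classical
  obtain ⟨x, hx⟩ := hμ.exists_hasEigenvector
  obtain ⟨n₀, hn₀⟩ : ∃ n, x n ≠ 0 := by
    by_contra! h
    exact hx.2 (PiLp.ext h)
  obtain ⟨n, hn, hmin⟩ :=
    Finset.exists_min_image (Finset.univ.filter fun n => x n ≠ 0) id ⟨n₀, by simpa using hn₀⟩
  refine End.hasEigenvalue_of_hasEigenvector
    ⟨End.mem_eigenspace_iff.mpr ?_, (Finset.mem_filter.mp hn).2⟩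
  have hTx : T x n = μ • x n := congrArg (· n) (End.mem_eigenspace_iff.mp hx.1)
  have hprev : (if 0 < (n : ℕ) then
      x ⟨(n : ℕ) - 1, lt_of_le_of_lt (Nat.sub_le _ _) n.isLt⟩ else 0) = 0 := by
    split_ifs with h
    · by_contra hne
      have := Fin.le_def.mp (hmin _ (by simpa using hne))
      simp only [id] at this
      omega
    · rfl
  rwa [hT, hprev, add_zero] at hTx

end TruncatedShift

section BlockPair

variable (𝕜 ι : Type*) [RCLike 𝕜] (N : ℕ)

def blockPairEquiv :
    (PiLp 2 (fun _ : Fin (N + 1) => EuclideanSpace 𝕜 ι) ×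
      PiLp 2 (fun _ : Fin (N + 1) => EuclideanSpace 𝕜 ι)) ≃ₗ[𝕜]
      EuclideanSpace 𝕜 (ι × Fin 2 × Fin (N + 1)) where
  toFun v := WithLp.toLp 2 fun i => if i.2.1 = 0 then v.2 i.2.2 i.1 else v.1 i.2.2.rev i.1
  invFun w := (WithLp.toLp 2 fun n => WithLp.toLp 2 fun j => w (j, 1, n.rev),
    WithLp.toLp 2 fun n => WithLp.toLp 2 fun j => w (j, 0, n))
  map_add' v w := by
    ext i
    simp only [PiLp.add_apply]
    split_ifs <;> rfl
  map_smul' c v := by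
    ext i
    simp only [PiLp.smul_apply, smul_eq_mul, RingHom.id_apply, mul_ite]
    split_ifs <;> rfl
  left_inv v := by
    ext n j
    · exact congrArg (fun m => v.1 m j) n.rev_rev
    · rfl
  right_inv w := by
    ext ⟨j, s, n⟩
    fin_cases s
    · rfl
    · exact congrArg (fun m => w (j, 1, m)) n.rev_rev

variable {𝕜 ι N}

@[simp]
theorem blockPairEquiv_apply
    (v : PiLp 2 (fun _ : Fin (N + 1) => EuclideanSpace 𝕜 ι) ×
      PiLp 2 (fun _ : Fin (N + 1) => EuclideanSpace 𝕜 ι)) (j : ι) (s : Fin 2) (n : Fin (N + 1)) :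
    blockPairEquiv 𝕜 ι N v (j, s, n) = if s = 0 then v.2 n j else v.1 n.rev j := rfl

theorem blockPairEquiv_intertwines {lam nu : ι → 𝕜}
    {T₀ T₁ : PiLp 2 (fun _ : Fin (N + 1) => EuclideanSpace 𝕜 ι) →
      PiLp 2 (fun _ : Fin (N + 1) => EuclideanSpace 𝕜 ι)}
    (hT₀ : ∀ x n j, T₀ x n j =
      lam j * x n j + (if h : (n : ℕ) + 1 < N + 1 then x ⟨(n : ℕ) + 1, h⟩ else 0) j)
    (hT₁ : ∀ x n j, T₁ x n j = nu j * x n j + (if 0 < (n : ℕ) then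
      x ⟨(n : ℕ) - 1, lt_of_le_of_lt (Nat.sub_le _ _) n.isLt⟩ else 0) j)
    {J : EuclideanSpace 𝕜 (ι × Fin 2 × Fin (N + 1)) → EuclideanSpace 𝕜 (ι × Fin 2 × Fin (N + 1))}
    (hJ : ∀ x j s n, J x (j, s, n) = (if s = 0 then lam j else nu j) * x (j, s, n) +
      (if h : (n : ℕ) + 1 < N + 1 then x (j, s, ⟨(n : ℕ) + 1, h⟩) else 0))
    (u : PiLp 2 (fun _ : Fin (N + 1) => EuclideanSpace 𝕜 ι) ×
      PiLp 2 (fun _ : Fin (N + 1) => EuclideanSpace 𝕜 ι)) :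
    blockPairEquiv 𝕜 ι N (T₁ u.1, T₀ u.2) = J (blockPairEquiv 𝕜 ι N u) := by
  ext ⟨j, s, n⟩
  rw [hJ]
  fin_cases s
  · have h00 : (⟨0, by decide⟩ : Fin 2) = 0 := rfl
    simp only [blockPairEquiv_apply, hT₀, if_pos h00, add_right_inj]
    split_ifs <;> rfl
  · have h10 : (⟨1, by decide⟩ : Fin 2) ≠ 0 := by decide
    simp only [blockPairEquiv_apply, hT₁, if_neg h10, add_right_inj]
    by_cases h : (n : ℕ) + 1 < N + 1
    · rw [dif_pos h, if_pos (by rw [Fin.val_rev]; omega)]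
      congr 2
    · rw [dif_neg h, if_neg (by rw [Fin.val_rev]; omega)]
      rfl

end BlockPair

theorem truncated_jordan_block_perturbation_similar_general
    (d N : ℕ)
    (lam nu : Fin d → ℂ)
    (hlamnu : ∀ j k, lam j ≠ nu k)
    (D Dstar : EuclideanSpace ℂ (Fin d) →L[ℂ] EuclideanSpace ℂ (Fin d))
    (hD : ∀ j, D (EuclideanSpace.single j 1) = lam j • EuclideanSpace.single j 1)
    (hDstar : ∀ j, Dstar (EuclideanSpace.single j 1) = nu j • EuclideanSpace.single j 1)
    (T₀ T₁ A : PiLp 2 (fun _ : Fin (N + 1) => EuclideanSpace ℂ (Fin d)) →L[ℂ]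
      PiLp 2 (fun _ : Fin (N + 1) => EuclideanSpace ℂ (Fin d)))
    (hT₀ : ∀ x, ∀ n : Fin (N + 1), T₀ x n =
      D (x n) + (if h : (n : ℕ) + 1 < N + 1 then x ⟨(n : ℕ) + 1, h⟩ else 0))
    (hT₁ : ∀ x, ∀ n : Fin (N + 1), T₁ x n =
      Dstar (x n) + (if 0 < (n : ℕ) then
        x ⟨(n : ℕ) - 1, lt_of_le_of_lt (Nat.sub_le _ _) n.isLt⟩ else 0))
    (T : (PiLp 2 (fun _ : Fin (N + 1) => EuclideanSpace ℂ (Fin d)) ×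
          PiLp 2 (fun _ : Fin (N + 1) => EuclideanSpace ℂ (Fin d))) →L[ℂ]
        (PiLp 2 (fun _ : Fin (N + 1) => EuclideanSpace ℂ (Fin d)) ×
          PiLp 2 (fun _ : Fin (N + 1) => EuclideanSpace ℂ (Fin d))))
    (hT : ∀ v, T v = (T₁ v.1 + A v.2, T₀ v.2)) :
    (∃ X : (PiLp 2 (fun _ : Fin (N + 1) => EuclideanSpace ℂ (Fin d)) ×
            PiLp 2 (fun _ : Fin (N + 1) => EuclideanSpace ℂ (Fin d))) ≃L[ℂ]
          (PiLp 2 (fun _ : Fin (N + 1) => EuclideanSpace ℂ (Fin d)) ×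
            PiLp 2 (fun _ : Fin (N + 1) => EuclideanSpace ℂ (Fin d))),
        ∀ v, X (T v) = (T₁ (X v).1, T₀ (X v).2)) ∧
    (∀ J : EuclideanSpace ℂ (Fin d × Fin 2 × Fin (N + 1)) →L[ℂ]
          EuclideanSpace ℂ (Fin d × Fin 2 × Fin (N + 1)),
      (∀ (j : Fin d) (s : Fin 2) (n : Fin (N + 1)),
        J (EuclideanSpace.single (j, s, n) 1) =
          (if s = 0 then lam j else nu j) • EuclideanSpace.single (j, s, n) 1 +
            (if 0 < (n : ℕ) then
              EuclideanSpace.single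
                (j, s, ⟨(n : ℕ) - 1, lt_of_le_of_lt (Nat.sub_le _ _) n.isLt⟩) 1 else 0)) →
      ∃ X : (PiLp 2 (fun _ : Fin (N + 1) => EuclideanSpace ℂ (Fin d)) ×
            PiLp 2 (fun _ : Fin (N + 1) => EuclideanSpace ℂ (Fin d))) ≃L[ℂ]
          EuclideanSpace ℂ (Fin d × Fin 2 × Fin (N + 1)),
        ∀ v, X (T v) = J (X v)) := by
  have hspec : Disjoint (spectrum ℂ T₁.toLinearMap) (spectrum ℂ T₀.toLinearMap) := by
    refine Set.disjoint_left.mpr fun μ h₁ h₀ => ?_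
    obtain ⟨k, rfl⟩ := ((End.hasEigenvalue_iff_mem_spectrum.mpr h₁).of_add_shift_adjoint
      hT₁).exists_eq_of_apply_single_eq_smul hDstar
    obtain ⟨j, hj⟩ := ((End.hasEigenvalue_iff_mem_spectrum.mpr h₀).of_add_shift
      hT₀).exists_eq_of_apply_single_eq_smul hD
    exact hlamnu j k hj
  refine ⟨?_, fun J hJ => ?_⟩
  · obtain ⟨X, hX⟩ := exists_continuousLinearEquiv_conj_of_disjoint_spectrum hspec A
      (LinearEquiv.refl ℂ _) (J := fun u => (T₁ u.1, T₀ u.2)) fun _ => rfl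
    exact ⟨X, fun v => by rw [hT, hX]⟩
  obtain ⟨X, hX⟩ := exists_continuousLinearEquiv_conj_of_disjoint_spectrum hspec A
    (blockPairEquiv ℂ (Fin d) N)
    (blockPairEquiv_intertwines (EuclideanSpace.apply_apply_eq_mul_add hD hT₀)
      (EuclideanSpace.apply_apply_eq_mul_add hDstar hT₁) (EuclideanSpace.apply_eq_of_jordan_apply_single hJ))
  exact ⟨X, fun v => by rw [hT, hX]⟩

/-- Lemma 4.3: a block upper-triangular perturbation `T = [[T₁, A],[0, T₀]]` of the pair of
"truncated Jordan" operators `T₀ = ⊕D + S`, `T₁ = ⊕D⋆ + S*` (with diagonal operators `D, D⋆`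
having pairwise distinct eigenvalues `λ_j`, `ν_j` in `𝔻`, mutually distinct from each other)
is similar to `T₁ ⊕ T₀`, and hence similar to the model operator `T_B` of the Blaschke
product `B = ∏_j b_{λ_j}^{N+1} b_{ν_j}^{N+1}`; the latter is expressed by similarity to the
direct sum `J` of the Jordan blocks of size `N+1` with eigenvalues `λ_j` and `ν_j`. -/
theorem truncated_jordan_block_perturbation_similar
    (d N : ℕ) (hd : 1 ≤ d) (hN : 1 ≤ N)
    (lam nu : Fin d → ℂ)
    (hball : ∀ j, ‖lam j‖ < 1 ∧ ‖nu j‖ < 1)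
    (hlam : Function.Injective lam) (hnu : Function.Injective nu)
    (hlamnu : ∀ j k, lam j ≠ nu k)
    (D Dstar : EuclideanSpace ℂ (Fin d) →L[ℂ] EuclideanSpace ℂ (Fin d))
    (hD : ∀ j, D (EuclideanSpace.single j 1) = lam j • EuclideanSpace.single j 1)
    (hDstar : ∀ j, Dstar (EuclideanSpace.single j 1) = nu j • EuclideanSpace.single j 1)
    (T₀ T₁ A : PiLp 2 (fun _ : Fin (N + 1) => EuclideanSpace ℂ (Fin d)) →L[ℂ]
      PiLp 2 (fun _ : Fin (N + 1) => EuclideanSpace ℂ (Fin d)))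
    (hT₀ : ∀ x, ∀ n : Fin (N + 1), T₀ x n =
      D (x n) + (if h : (n : ℕ) + 1 < N + 1 then x ⟨(n : ℕ) + 1, h⟩ else 0))
    (hT₁ : ∀ x, ∀ n : Fin (N + 1), T₁ x n =
      Dstar (x n) + (if 0 < (n : ℕ) then
        x ⟨(n : ℕ) - 1, lt_of_le_of_lt (Nat.sub_le _ _) n.isLt⟩ else 0))
    (T : (PiLp 2 (fun _ : Fin (N + 1) => EuclideanSpace ℂ (Fin d)) ×
          PiLp 2 (fun _ : Fin (N + 1) => EuclideanSpace ℂ (Fin d))) →L[ℂ]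
        (PiLp 2 (fun _ : Fin (N + 1) => EuclideanSpace ℂ (Fin d)) ×
          PiLp 2 (fun _ : Fin (N + 1) => EuclideanSpace ℂ (Fin d))))
    (hT : ∀ v, T v = (T₁ v.1 + A v.2, T₀ v.2)) :
    (∃ X : (PiLp 2 (fun _ : Fin (N + 1) => EuclideanSpace ℂ (Fin d)) ×
            PiLp 2 (fun _ : Fin (N + 1) => EuclideanSpace ℂ (Fin d))) ≃L[ℂ]
          (PiLp 2 (fun _ : Fin (N + 1) => EuclideanSpace ℂ (Fin d)) ×
            PiLp 2 (fun _ : Fin (N + 1) => EuclideanSpace ℂ (Fin d))),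
        ∀ v, X (T v) = (T₁ (X v).1, T₀ (X v).2)) ∧
    (∀ J : EuclideanSpace ℂ (Fin d × Fin 2 × Fin (N + 1)) →L[ℂ]
          EuclideanSpace ℂ (Fin d × Fin 2 × Fin (N + 1)),
      (∀ (j : Fin d) (s : Fin 2) (n : Fin (N + 1)),
        J (EuclideanSpace.single (j, s, n) 1) =
          (if s = 0 then lam j else nu j) • EuclideanSpace.single (j, s, n) 1 +
            (if 0 < (n : ℕ) then
              EuclideanSpace.single
                (j, s, ⟨(n : ℕ) - 1, lt_of_le_of_lt (Nat.sub_le _ _) n.isLt⟩) 1 else 0)) →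
      ∃ X : (PiLp 2 (fun _ : Fin (N + 1) => EuclideanSpace ℂ (Fin d)) ×
            PiLp 2 (fun _ : Fin (N + 1) => EuclideanSpace ℂ (Fin d))) ≃L[ℂ]
          EuclideanSpace ℂ (Fin d × Fin 2 × Fin (N + 1)),
        ∀ v, X (T v) = J (X v)) :=
  truncated_jordan_block_perturbation_similar_general d N lam nu hlamnu D Dstar hD hDstar T₀ T₁ A
    hT₀ hT₁ T hT
end
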